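/- For all y > 0 and 0 < x < 1, we have [Γ(x+y+1)/Γ(y+1)]^{1/x} / [Γ(x+y+2)/Γ(y+1)]^{1/(x+1)} > sqrt((x+y)/(x+y+1)). -/

import Mathlib

/-!
The error of quadratic interpolation has the sign of the third derivative, which is positive for
`log` and negative for `log ∘ Gamma`. For `log` this is read off the Taylor series of `log (1 - t)`,
all of whose error coefficients are nonnegative. Since `log (Gamma t)` is the limit of
`t log n + log n! - ∑_{m ≤ n} log (t + m)` and interpolation is exact on affine functions, the error
for `log ∘ Gamma` is minus a sum of errors for `log`. With `Gamma (t + 1) = t * Gamma t` this becomes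
`log Γ(s) - log Γ(s - x) > x(1+x)/2 · log (s - 1) + x(1-x)/2 · log s`, which for `s = x + y + 1`
is `x (x + 1)` times the logarithm of the claimed inequality.
-/

open Real Filter Topology Finset
open Real.BohrMollerup (logGammaSeq tendsto_log_gamma)

/-- The quadratic polynomial interpolating `f` at the nodes `s - 1, s, s + 1`, evaluated at
`s - x`. -/
noncomputable def quadInterp (f : ℝ → ℝ) (s x : ℝ) : ℝ :=
  x * (1 + x) / 2 * f (s - 1) + (1 - x ^ 2) * f s - x * (1 - x) / 2 * f (s + 1)

lemma quadInterp_coeff_nonneg {x : ℝ} (hx0 : 0 ≤ x) (hx1 : x ≤ 1) (n : ℕ) :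
    0 ≤ x * (1 + x) / 2 - x * (1 - x) / 2 * (-1) ^ (n + 1) - x ^ (n + 1) := by
  rcases Nat.even_or_odd n with hn | hn
  · have hpow : x ^ (n + 1) ≤ x := pow_le_of_le_one hx0 hx1 n.succ_ne_zero
    rw [(hn.add_one).neg_one_pow]
    linarith
  · have hpow : x ^ (n + 1) ≤ x ^ 2 := pow_le_pow_of_le_one hx0 hx1 (by have := hn.pos; omega)
    rw [(hn.add_one).neg_one_pow]
    linarith

lemma mul_log_one_sub_sub_mul_log_one_add_lt {x t : ℝ} (hx0 : 0 < x) (hx1 : x < 1)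
    (ht0 : 0 < t) (ht1 : t < 1) :
    x * (1 + x) / 2 * log (1 - t) - x * (1 - x) / 2 * log (1 + t) < log (1 - x * t) := by
  have hxt : |x * t| < 1 := by
    rw [abs_of_pos (by positivity)]; nlinarith
  have hseries := (((hasSum_pow_div_log_of_abs_lt_one (abs_lt.2 ⟨by linarith, ht1⟩)).mul_left
    (x * (1 + x) / 2)).sub ((hasSum_pow_div_log_of_abs_lt_one (x := -t)
      (abs_lt.2 ⟨by linarith, by linarith⟩)).mul_left (x * (1 - x) / 2))).sub
    (hasSum_pow_div_log_of_abs_lt_one hxt)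
  have hterm (n : ℕ) : x * (1 + x) / 2 * (t ^ (n + 1) / (n + 1))
      - x * (1 - x) / 2 * ((-t) ^ (n + 1) / (n + 1)) - (x * t) ^ (n + 1) / (n + 1) =
      (x * (1 + x) / 2 - x * (1 - x) / 2 * (-1) ^ (n + 1) - x ^ (n + 1)) *
        (t ^ (n + 1) / (n + 1)) := by
    rw [neg_pow, mul_pow]
    ring
  have hcoeff : 0 < x * (1 + x) / 2 - x * (1 - x) / 2 * (-1) ^ (2 + 1) - x ^ (2 + 1) := by
    norm_num
    nlinarith [mul_pos (mul_pos hx0 (sub_pos.2 hx1)) (add_pos one_pos hx0)]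
  have hpos := hasSum_lt (f := fun _ ↦ 0) (i := 2)
    (fun n ↦ by
      rw [hterm]
      exact mul_nonneg (quadInterp_coeff_nonneg hx0.le hx1.le n) (by positivity))
    (by rw [hterm]; exact mul_pos hcoeff (by positivity))
    (hasSum_zero (L := SummationFilter.unconditional ℕ)) hseries
  simp only [sub_neg_eq_add] at hpos
  linarith

lemma quadInterp_log_lt {s x : ℝ} (hs : 1 < s) (hx0 : 0 < x) (hx1 : x < 1) :
    quadInterp log s x < log (s - x) := by
  have hs0 : 0 < s := by linarith
  have h := mul_log_one_sub_sub_mul_log_one_add_lt hx0 hx1 (inv_pos.2 hs0)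
    (inv_lt_one_of_one_lt₀ hs)
  rw [show 1 - s⁻¹ = (s - 1) / s by field_simp, show 1 + s⁻¹ = (s + 1) / s by field_simp,
    show 1 - x * s⁻¹ = (s - x) / s by field_simp, log_div (by linarith) hs0.ne',
    log_div (by linarith) hs0.ne', log_div (by linarith) hs0.ne'] at h
  unfold quadInterp
  linear_combination h

lemma quadInterp_logGammaSeq (s x : ℝ) (n : ℕ) :
    quadInterp (logGammaSeq · n) s x =
      logGammaSeq (s - x) n +
        ∑ m ∈ range (n + 1), (log (s + m - x) - quadInterp log (s + m) x) := by
  simp only [quadInterp, logGammaSeq, sum_sub_distrib, sum_add_distrib, ← mul_sum]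
  ring_nf

lemma Filter.Tendsto.quadInterp {ι : Type*} {l : Filter ι} {F : ι → ℝ → ℝ} {f : ℝ → ℝ} {s : ℝ}
    (h₁ : Tendsto (F · (s - 1)) l (𝓝 (f (s - 1)))) (h₀ : Tendsto (F · s) l (𝓝 (f s)))
    (h₂ : Tendsto (F · (s + 1)) l (𝓝 (f (s + 1)))) (x : ℝ) :
    Tendsto (fun i ↦ quadInterp (F i) s x) l (𝓝 (quadInterp f s x)) :=
  ((h₁.const_mul _).add (h₀.const_mul _)).sub (h₂.const_mul _)

lemma log_Gamma_lt_quadInterp {s x : ℝ} (hs : 1 < s) (hx0 : 0 < x) (hx1 : x < 1) :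
    log (Gamma (s - x)) < quadInterp (log ∘ Gamma) s x := by
  have hlim := (Tendsto.quadInterp (F := fun n t ↦ logGammaSeq t n) (f := log ∘ Gamma) (s := s)
    (tendsto_log_gamma (by linarith)) (tendsto_log_gamma (by linarith))
    (tendsto_log_gamma (by linarith)) x).sub (tendsto_log_gamma (x := s - x) (by linarith))
  have hle : log (s - x) - quadInterp log s x ≤
      quadInterp (log ∘ Gamma) s x - log (Gamma (s - x)) := by
    refine ge_of_tendsto' hlim fun n ↦ ?_
    rw [quadInterp_logGammaSeq, add_sub_cancel_left]
    simpa using single_le_sum (fun (m : ℕ) _ ↦ (sub_pos.2 (quadInterp_log_lt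
      (lt_add_of_lt_of_nonneg hs m.cast_nonneg) hx0 hx1)).le) (mem_range.2 n.succ_pos)
  linarith [quadInterp_log_lt hs hx0 hx1]

lemma log_Gamma_add_one {t : ℝ} (ht : 0 < t) : log (Gamma (t + 1)) = log t + log (Gamma t) := by
  rw [Gamma_add_one ht.ne', log_mul ht.ne' (Gamma_pos_of_pos ht).ne']

lemma log_Gamma_sub_add_lt {s x : ℝ} (hs : 1 < s) (hx0 : 0 < x) (hx1 : x < 1) :
    log (Gamma (s - x)) + x * (1 + x) / 2 * log (s - 1) + x * (1 - x) / 2 * log s <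
      log (Gamma s) := by
  have h := log_Gamma_lt_quadInterp hs hx0 hx1
  have h₁ := log_Gamma_add_one (t := s - 1) (by linarith)
  rw [sub_add_cancel] at h₁
  have h₂ := log_Gamma_add_one (t := s) (by linarith)
  unfold quadInterp at h
  simp only [Function.comp_apply] at h
  linear_combination h - x * (1 + x) / 2 * h₁ - x * (1 - x) / 2 * h₂

theorem stmt_1 (x y : ℝ) (hy : 0 < y) (hx0 : 0 < x) (hx1 : x < 1) :
    (Real.Gamma (x + y + 1) / Real.Gamma (y + 1)) ^ (1 / x) /
      (Real.Gamma (x + y + 2) / Real.Gamma (y + 1)) ^ (1 / (x + 1)) >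
    Real.sqrt ((x + y) / (x + y + 1)) := by
  have hΓ := log_Gamma_sub_add_lt (s := x + y + 1) (by linarith) hx0 hx1
  rw [show x + y + 1 - x = y + 1 by ring, add_sub_cancel_right] at hΓ
  have hrec := log_Gamma_add_one (t := x + y + 1) (by positivity)
  rw [show x + y + 1 + 1 = x + y + 2 by ring] at hrec
  rw [gt_iff_lt, ← log_lt_log_iff (by positivity) (by positivity), log_sqrt (by positivity),
    log_div (by positivity) (by positivity), log_div (by positivity) (by positivity),
    log_rpow (by positivity), log_rpow (by positivity), log_div (by positivity) (by positivity),
    log_div (by positivity) (by positivity), hrec]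
  have hgap : 1 / x * (log (Gamma (x + y + 1)) - log (Gamma (y + 1))) - 1 / (x + 1) *
      (log (x + y + 1) + log (Gamma (x + y + 1)) - log (Gamma (y + 1))) -
      (log (x + y) - log (x + y + 1)) / 2 =
      (log (Gamma (x + y + 1)) - log (Gamma (y + 1)) - x * (1 + x) / 2 * log (x + y) -
        x * (1 - x) / 2 * log (x + y + 1)) / (x * (x + 1)) := by
    field_simp
    ring
  rw [← sub_pos, hgap]
  exact div_pos (by linarith) (by positivity)
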